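/- Let Ω ⊂ ℙ¹ be a circled domain with complementary closed discs Δ̄_j (j ∈ ℕ), and let C ⊂ ℙ¹ be any compact set. Then the union of all the discs Δ̄_j that intersect C is a closed subset of ℙ¹ (and it is a union of connected components of ℙ¹ \ Ω). -/

import Mathlib

open Complex Metric Set Filter Topology OnePoint

noncomputable section

open scoped Classical in
/-- The chart `z ↦ 1/z` (inverted) around `∞` on the Riemann sphere `ℙ¹ = ℂ ∪ {∞}`,
viewed as a parametrization `ℂ → ℙ¹` sending `0` to `∞`. -/
def invChart (z : ℂ) : OnePoint ℂ := if z = 0 then ∞ else ((z⁻¹ : ℂ) : OnePoint ℂ)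

/-- `f` is a holomorphic immersion on the open set `Ω ⊆ ℙ¹`: in each of the two standard
charts of the Riemann sphere it is analytic with nonvanishing derivative. -/
def SphHolImmersionOn (f : OnePoint ℂ → ℂ × ℂ) (Ω : Set (OnePoint ℂ)) : Prop :=
  (∀ z : ℂ, (z : OnePoint ℂ) ∈ Ω →
      AnalyticAt ℂ (fun w : ℂ => f (w : OnePoint ℂ)) z ∧
      deriv (fun w : ℂ => f (w : OnePoint ℂ)) z ≠ 0) ∧
  (∞ ∈ Ω →
      AnalyticAt ℂ (fun w : ℂ => f (invChart w)) 0 ∧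
      deriv (fun w : ℂ => f (invChart w)) 0 ≠ 0)

/-- A proper holomorphic embedding of `Ω ⊆ ℙ¹` into `ℂ²`: an injective proper
holomorphic immersion `Ω → ℂ²`. -/
def ProperHolomorphicEmbedding (Ω : Set (OnePoint ℂ)) (f : OnePoint ℂ → ℂ × ℂ) : Prop :=
  Set.InjOn f Ω ∧ SphHolImmersionOn f Ω ∧
  ∀ K : Set (ℂ × ℂ), IsCompact K → IsCompact {x ∈ Ω | f x ∈ K}

/-- A closed round disc of positive radius on the Riemann sphere: under stereographic
projection these are the closed metric discs, the complements of open metric discs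
(round discs containing `∞` in the interior), and closed half-planes together with `∞`
(round discs with `∞` on the boundary). -/
def IsRoundDisc (D : Set (OnePoint ℂ)) : Prop :=
  (∃ (c : ℂ) (r : ℝ), 0 < r ∧ D = (fun z : ℂ => (z : OnePoint ℂ)) '' Metric.closedBall c r) ∨
  (∃ (c : ℂ) (r : ℝ), 0 < r ∧
      D = insert ∞ ((fun z : ℂ => (z : OnePoint ℂ)) '' (Metric.ball c r)ᶜ)) ∨
  (∃ (a : ℂ) (t : ℝ), a ≠ 0 ∧
      D = insert ∞ ((fun z : ℂ => (z : OnePoint ℂ)) '' {z : ℂ | t ≤ (starRingEnd ℂ a * z).re}))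

/-- A circled domain in `ℙ¹`: a domain (connected open set) whose complement is nonempty
and is a union of pairwise disjoint closed round discs of positive radii. -/
def IsCircledDomain (Ω : Set (OnePoint ℂ)) : Prop :=
  IsOpen Ω ∧ IsConnected Ω ∧ Ωᶜ.Nonempty ∧
  ∃ (ι : Type) (Δ : ι → Set (OnePoint ℂ)), (∀ i, IsRoundDisc (Δ i)) ∧
    Pairwise (Function.onFun Disjoint Δ) ∧ (⋃ i, Δ i) = Ωᶜ

/-!
Disjoint round discs form a null family: near any point of `ℙ¹`, all but finitely many of them
are small, because pairwise disjoint planar discs of radius at least `ρ` meeting a bounded set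
are finite in number (points at depth `ρ` inside them are `ρ`-separated). So if discs meeting
`C` accumulated at a point `y ∉ C`, all but finitely many of those near `y` would lie in the
neighbourhood `Cᶜ` of `y`, which is absurd, and the finitely many others form a closed set.
A connected component of `ℙ¹ \ Ω` is a continuum covered by countably many pairwise disjoint
closed discs, so by Sierpiński's theorem it lies in one of them.
-/

theorem IsCompact.connectedComponentIn {X : Type*} [TopologicalSpace X] {F : Set X}
    (hF : IsCompact F) (x : X) : IsCompact (connectedComponentIn F x) := by
  by_cases hx : x ∈ F
  · have := isCompact_iff_compactSpace.mp hF
    rw [connectedComponentIn_eq_image hx]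
    exact isClosed_connectedComponent.isCompact.image continuous_subtype_val
  · rw [connectedComponentIn_eq_empty hx]
    exact isCompact_empty

section CompactHausdorff

variable {X : Type*} [TopologicalSpace X] [CompactSpace X] [T2Space X]

theorem exists_isClopen_subset_of_connectedComponent_subset {x : X} {U : Set X}
    (hU : IsOpen U) (h : connectedComponent x ⊆ U) : ∃ Z, IsClopen Z ∧ x ∈ Z ∧ Z ⊆ U := by
  rw [connectedComponent_eq_iInter_isClopen] at h
  obtain ⟨u, hu⟩ := hU.isClosed_compl.isCompact.elim_finite_subfamily_closed
    (fun Z : {Z : Set X // IsClopen Z ∧ x ∈ Z} ↦ Z.1) (fun Z ↦ Z.2.1.isClosed)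
    (disjoint_iff_inter_eq_empty.mp (disjoint_compl_left_iff_subset.mpr h))
  refine ⟨⋂ Z ∈ u, Z.1, isClopen_biInter_finset fun Z _ ↦ Z.2.1,
    mem_iInter₂.mpr fun Z _ ↦ Z.2.2, ?_⟩
  rwa [← disjoint_compl_left_iff_subset, disjoint_iff_inter_eq_empty]

/-- The boundary bumping theorem. -/
theorem connectedComponentIn_inter_frontier_nonempty [PreconnectedSpace X] {A : Set X}
    (hA : IsClosed A) (hA' : A ≠ univ) {x : X} (hx : x ∈ A) :
    (connectedComponentIn A x ∩ frontier A).Nonempty := by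
  by_contra h
  have : CompactSpace A := isCompact_iff_compactSpace.mp hA.isCompact
  obtain ⟨Z, hZ, hxZ, hZA⟩ : ∃ Z : Set A, IsClopen Z ∧ ⟨x, hx⟩ ∈ Z ∧ Z ⊆ (↑) ⁻¹' interior A := by
    refine exists_isClopen_subset_of_connectedComponent_subset
      (isOpen_interior.preimage continuous_subtype_val) fun y hy ↦ ?_
    have hyx : (y : X) ∈ connectedComponentIn A x := by
      rw [connectedComponentIn_eq_image hx]; exact mem_image_of_mem _ hy
    have hyF : (y : X) ∉ frontier A := fun hyF ↦ h ⟨y, hyx, hyF⟩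
    rw [hA.frontier_eq] at hyF
    simpa [y.2] using hyF
  have hopen : IsOpen ((↑) '' Z : Set X) := by
    obtain ⟨O, hO, rfl⟩ := isOpen_induced_iff.mp hZ.isOpen
    rw [Subtype.image_preimage_coe]
    have : A ∩ O = interior A ∩ O := by
      refine subset_antisymm (fun y hy ↦ ⟨?_, hy.2⟩) (inter_subset_inter_left _ interior_subset)
      exact hZA (show (⟨y, hy.1⟩ : A) ∈ (↑) ⁻¹' O from hy.2)
    rw [this]
    exact isOpen_interior.inter hO
  have hclosed : IsClosed ((↑) '' Z : Set X) :=
    hA.isClosedEmbedding_subtypeVal.isClosedMap _ hZ.isClosed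
  rcases isClopen_iff.mp ⟨hclosed, hopen⟩ with h0 | h1
  · exact (Nonempty.ne_empty ⟨x, mem_image_of_mem _ hxZ⟩) h0
  · exact hA' (eq_univ_of_univ_subset
      (h1 ▸ (image_subset_range _ _).trans Subtype.range_coe.subset))

end CompactHausdorff

section Sierpinski

variable {X ι : Type*} [TopologicalSpace X] [T2Space X] {F : ι → Set X}

theorem exists_subset_disjoint_of_nontrivial (hF : ∀ i, IsClosed (F i))
    (hdisj : Pairwise (Function.onFun Disjoint F)) {Y : Set X} (hYc : IsCompact Y)
    (hY : IsPreconnected Y) (hYF : Y ⊆ ⋃ i, F i) (h2 : {i | (Y ∩ F i).Nonempty}.Nontrivial) (n : ι) :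
    ∃ Y' ⊆ Y, IsCompact Y' ∧ IsPreconnected Y' ∧ Disjoint Y' (F n) ∧
      {i | (Y' ∩ F i).Nonempty}.Nontrivial := by
  by_cases hn : Disjoint Y (F n)
  · exact ⟨Y, subset_rfl, hYc, hY, hn, h2⟩
  obtain ⟨p, hpY, hpn⟩ := not_disjoint_iff.mp hn
  obtain ⟨m, ⟨q, hqY, hqm⟩, hmn⟩ := h2.exists_ne n
  have : CompactSpace Y := isCompact_iff_compactSpace.mp hYc
  have : PreconnectedSpace Y := Subtype.preconnectedSpace hY
  obtain ⟨U, V, hU, hV, hnU, hmV, hUV⟩ := normal_separation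
    ((hF n).preimage continuous_subtype_val) ((hF m).preimage continuous_subtype_val)
    ((hdisj hmn.symm).preimage ((↑) : Y → X))
  have hqU : (⟨q, hqY⟩ : Y) ∈ Uᶜ := fun hqU ↦ hUV.le_bot ⟨hqU, hmV hqm⟩
  have hUc : Uᶜ ≠ univ := fun h ↦ (h ▸ mem_univ (⟨p, hpY⟩ : Y) : _ ∈ Uᶜ) (hnU hpn)
  -- the component of `q` in `Uᶜ` avoids `F n ⊆ U` but reaches `closure U`, which misses `F m`
  obtain ⟨z, hzK, hzU⟩ := connectedComponentIn_inter_frontier_nonempty hU.isClosed_compl hUc hqU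
  refine ⟨(↑) '' connectedComponentIn Uᶜ ⟨q, hqY⟩, image_subset_range _ _ |>.trans
      Subtype.range_coe.subset, (hU.isClosed_compl.isCompact.connectedComponentIn _).image
      continuous_subtype_val, isPreconnected_connectedComponentIn.image _
      continuous_subtype_val.continuousOn, ?_, ?_⟩
  · rw [disjoint_left]
    rintro _ ⟨w, hw, rfl⟩ hwn
    exact connectedComponentIn_subset _ _ hw (hnU hwn)
  · obtain ⟨k, hzk⟩ := mem_iUnion.mp (hYF z.2)
    have hzU' : z ∈ closure U := by
      rw [frontier_compl, hU.frontier_eq] at hzU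
      exact hzU.1
    have hkm : k ≠ m := by
      rintro rfl
      exact (hUV.symm.closure_right hV).le_bot ⟨hmV hzk, hzU'⟩
    exact ⟨k, ⟨z, mem_image_of_mem _ hzK, hzk⟩, m,
      ⟨q, ⟨⟨q, hqY⟩, mem_connectedComponentIn hqU, rfl⟩, hqm⟩, hkm⟩

/-- Sierpiński's theorem. -/
theorem IsPreconnected.subsingleton_setOf_inter_nonempty [Countable ι]
    (hF : ∀ i, IsClosed (F i)) (hdisj : Pairwise (Function.onFun Disjoint F)) {K : Set X}
    (hKc : IsCompact K) (hK : IsPreconnected K) (hKF : K ⊆ ⋃ i, F i) :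
    {i | (K ∩ F i).Nonempty}.Subsingleton := by
  by_contra h2
  rw [not_subsingleton_iff] at h2
  have : Nonempty ι := ⟨h2.nonempty.some⟩
  obtain ⟨e, he⟩ := exists_surjective_nat ι
  -- shrink `K` step by step, the `k`-th step removing `F (e k)`
  let P : Set X → Prop := fun Y ↦ Y ⊆ K ∧ IsCompact Y ∧ IsPreconnected Y ∧
    {i | (Y ∩ F i).Nonempty}.Nontrivial
  have step : ∀ Y, P Y → ∀ n, ∃ Y' ⊆ Y, P Y' ∧ Disjoint Y' (F n) := by
    rintro Y ⟨hYK, hYc, hY, hY2⟩ n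
    obtain ⟨Y', hY'Y, hY'c, hY', hY'n, hY'2⟩ :=
      exists_subset_disjoint_of_nontrivial hF hdisj hYc hY (hYK.trans hKF) hY2 n
    exact ⟨Y', hY'Y, ⟨hY'Y.trans hYK, hY'c, hY', hY'2⟩, hY'n⟩
  choose! next hnextY hnextP hnextF using step
  let Ys : ℕ → Set X := fun k ↦ Nat.rec K (fun k Y ↦ next Y (e k)) k
  have hP : ∀ k, P (Ys k) := fun k ↦ by
    induction k with
    | zero => exact ⟨subset_rfl, hKc, hK, h2⟩
    | succ k ih => exact hnextP _ ih _
  obtain ⟨z, hz⟩ := IsCompact.nonempty_iInter_of_sequence_nonempty_isCompact_isClosed Ys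
    (fun k ↦ hnextY _ (hP k) _)
    (fun k ↦ let ⟨_, ⟨y, hy, _⟩, _⟩ := (hP k).2.2.2; ⟨y, hy⟩)
    hKc (fun k ↦ (hP k).2.1.isClosed)
  obtain ⟨i, hzi⟩ := mem_iUnion.mp (hKF (mem_iInter.mp hz 0))
  obtain ⟨k, rfl⟩ := he i
  exact (hnextF _ (hP k) _).le_bot ⟨mem_iInter.mp hz (k + 1), hzi⟩

end Sierpinski

/-- Topological form of "the diameters of the `Δ j` tend to zero": near any point, all but
finitely many members are small with respect to any prescribed neighbourhood. -/
def IsNullFamily {X ι : Type*} [TopologicalSpace X] (Δ : ι → Set X) : Prop :=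
  ∀ y, ∀ W ∈ 𝓝 y, ∃ V ∈ 𝓝 y, {j | (Δ j ∩ V).Nonempty ∧ ¬Δ j ⊆ W}.Finite

theorem IsNullFamily.isClosed_biUnion_inter_nonempty {X ι : Type*} [TopologicalSpace X]
    [T2Space X] {Δ : ι → Set X} (hΔ : IsNullFamily Δ) (hcl : ∀ j, IsClosed (Δ j))
    (hU : IsClosed (⋃ j, Δ j)) {C : Set X} (hC : IsCompact C) :
    IsClosed (⋃ j ∈ {j | (Δ j ∩ C).Nonempty}, Δ j) := by
  set S := {j | (Δ j ∩ C).Nonempty}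
  refine isClosed_of_closure_subset fun y hy ↦ ?_
  by_cases hyC : y ∈ C
  · obtain ⟨k, hk⟩ := mem_iUnion.mp <|
      closure_minimal (iUnion₂_subset fun j _ ↦ subset_iUnion Δ j) hU hy
    exact mem_biUnion ⟨y, hk, hyC⟩ hk
  obtain ⟨V, hV, hfin⟩ := hΔ y Cᶜ (hC.isClosed.isOpen_compl.mem_nhds hyC)
  set T := {j ∈ S | (Δ j ∩ V).Nonempty}
  have hT : T.Finite := hfin.subset fun j hj ↦ by
    obtain ⟨⟨w, hwj, hwC⟩, hjV⟩ := hj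
    exact ⟨hjV, fun h ↦ h hwj hwC⟩
  by_cases hyT : y ∈ ⋃ j ∈ T, Δ j
  · obtain ⟨j, hj, hyj⟩ := mem_iUnion₂.mp hyT
    exact mem_biUnion hj.1 hyj
  obtain ⟨z, ⟨hzV, hzT⟩, hzS⟩ := mem_closure_iff_nhds.mp hy _ <|
    inter_mem hV ((hT.isClosed_biUnion fun j _ ↦ hcl j).isOpen_compl.mem_nhds hyT)
  obtain ⟨j, hjS, hzj⟩ := mem_iUnion₂.mp hzS
  exact absurd (mem_biUnion (show j ∈ T from ⟨hjS, z, hzj, hzV⟩) hzj) hzT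

section ClosedBalls

variable {E : Type*}

theorem lt_two_mul_radius_of_inter_nonempty_of_not_subset [PseudoMetricSpace E] {c x : E} {r a δ : ℝ}
    (hmeet : (closedBall c r ∩ closedBall x a).Nonempty)
    (hout : ¬closedBall c r ⊆ closedBall x (a + δ)) : δ < 2 * r := by
  obtain ⟨p, hpc, hpx⟩ := hmeet
  obtain ⟨w, hwc, hwx⟩ := not_subset.mp hout
  rw [mem_closedBall, not_le] at hwx
  rw [mem_closedBall] at hpc hpx hwc
  linarith [dist_triangle4 w c p x, dist_comm c p]

variable [NormedAddCommGroup E] [NormedSpace ℝ E]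

theorem exists_closedBall_subset_closedBall_dist_le {c p : E} {r ρ : ℝ} (hρ : 0 ≤ ρ)
    (hρr : ρ ≤ r) (hp : p ∈ closedBall c r) :
    ∃ q, dist q p ≤ ρ ∧ closedBall q ρ ⊆ closedBall c r := by
  rw [mem_closedBall] at hp
  by_cases hpc : dist p c ≤ ρ
  · exact ⟨c, by rwa [dist_comm], closedBall_subset_closedBall hρr⟩
  -- otherwise move from `p` towards `c` by exactly `ρ`
  rw [not_le] at hpc
  have hd : 0 < dist p c := hρ.trans_lt hpc
  refine ⟨AffineMap.lineMap p c (ρ / dist p c), ?_, closedBall_subset_closedBall' ?_⟩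
  · rw [dist_lineMap_left, Real.norm_eq_abs, abs_of_nonneg (by positivity),
      div_mul_cancel₀ _ hd.ne']
  · rw [dist_lineMap_right, Real.norm_eq_abs,
      abs_of_nonneg (sub_nonneg.mpr ((div_le_one hd).mpr hpc.le)), sub_mul, one_mul,
      div_mul_cancel₀ _ hd.ne']
    linarith

theorem Set.PairwiseDisjoint.finite_of_closedBall_inter_nonempty [ProperSpace E] {ι : Type*}
    {J : Set ι} {c : ι → E} {r : ι → ℝ} (hJ : J.PairwiseDisjoint fun j ↦ closedBall (c j) (r j))
    {ρ : ℝ} (hρ : 0 < ρ) (hr : ∀ j ∈ J, ρ ≤ r j) {x : E} {a : ℝ}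
    (hmeet : ∀ j ∈ J, (closedBall (c j) (r j) ∩ closedBall x a).Nonempty) : J.Finite := by
  choose! p hpc hpx using hmeet
  choose! q hqp hq using fun j (hj : j ∈ J) ↦
    exists_closedBall_subset_closedBall_dist_le hρ.le (hr j hj) (hpc j hj)
  have hqx : ∀ j ∈ J, q j ∈ closedBall x (ρ + a) := fun j hj ↦
    (dist_triangle _ _ _).trans (add_le_add (hqp j hj) (mem_closedBall.mp (hpx j hj)))
  obtain ⟨t, -, ht, hcover⟩ := finite_cover_balls_of_compact (isCompact_closedBall x (ρ + a))
    (half_pos hρ)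
  choose! f hft hf using fun j (hj : j ∈ J) ↦ mem_iUnion₂.mp (hcover (hqx j hj))
  -- the centres `q j` are `ρ`-separated, so each ball of the cover contains at most one
  refine ht.of_injOn hft fun i hi j hj hij ↦ hJ.elim hi hj (not_disjoint_iff.mpr
    ⟨q i, hq i hi (mem_closedBall_self hρ.le), hq j hj ?_⟩)
  have hqi := mem_ball.mp (hf i hi)
  rw [hij] at hqi
  rw [mem_closedBall]
  linarith [dist_triangle_right (q i) (q j) (f j), mem_ball.mp (hf j hj)]

end ClosedBalls

theorem OnePoint.subset_of_preimage_coe_subset {X : Type*} {D W : Set (OnePoint X)}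
    (hD : ∞ ∉ D) (h : ((↑) : X → OnePoint X) ⁻¹' D ⊆ (↑) ⁻¹' W) : D ⊆ W := by
  intro w hw
  induction w using OnePoint.rec with
  | infty => exact absurd hw hD
  | coe z => exact h hw

theorem OnePoint.preimage_coe_insert_infty_image_coe {X : Type*} (s : Set X) :
    ((↑) : X → OnePoint X) ⁻¹' insert ∞ ((↑) '' s) = s := by
  ext
  simp

namespace IsRoundDisc

variable {D : Set (OnePoint ℂ)}

theorem isClosed (h : IsRoundDisc D) : IsClosed D := by
  rcases h with ⟨c, r, -, rfl⟩ | ⟨c, r, -, rfl⟩ | ⟨a, t, -, rfl⟩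
  · exact OnePoint.isClosed_image_coe.mpr ⟨isClosed_closedBall, isCompact_closedBall c r⟩
  all_goals rw [OnePoint.isClosed_iff_of_mem (mem_insert _ _),
    OnePoint.preimage_coe_insert_infty_image_coe]
  · exact isOpen_ball.isClosed_compl
  · exact isClosed_le continuous_const (by fun_prop)

theorem exists_preimage_coe_eq_closedBall (h : IsRoundDisc D) (hD : ∞ ∉ D) :
    ∃ c r, ((↑) : ℂ → OnePoint ℂ) ⁻¹' D = closedBall c r := by
  rcases h with ⟨c, r, -, rfl⟩ | ⟨c, r, -, rfl⟩ | ⟨a, t, -, rfl⟩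
  · exact ⟨c, r, preimage_image_eq _ OnePoint.coe_injective⟩
  all_goals exact absurd (mem_insert _ _) hD

variable {ι : Type*} {Δ : ι → Set (OnePoint ℂ)}

theorem finite_setOf_preimage_coe_inter_nonempty_not_subset (hdisc : ∀ j, IsRoundDisc (Δ j))
    (hdisj : Pairwise (Function.onFun Disjoint Δ)) {δ : ℝ} (hδ : 0 < δ) (x : ℂ) (a : ℝ) :
    {j | ∞ ∉ Δ j ∧ ((↑) ⁻¹' Δ j ∩ closedBall x a).Nonempty ∧
      ¬(↑) ⁻¹' Δ j ⊆ closedBall x (a + δ)}.Finite := by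
  choose! c r hcr using fun j (hj : ∞ ∉ Δ j) ↦ (hdisc j).exists_preimage_coe_eq_closedBall hj
  have hJ : {j | ∞ ∉ Δ j}.PairwiseDisjoint fun j ↦ closedBall (c j) (r j) := by
    intro i hi j hj hij
    simp only [Function.onFun, ← hcr i hi, ← hcr j hj]
    exact (hdisj hij).preimage _
  refine (hJ.subset fun j hj ↦ hj.1).finite_of_closedBall_inter_nonempty (half_pos hδ)
    (fun j ⟨hj, hmeet, hout⟩ ↦ ?_) (x := x) (a := a) fun j ⟨hj, hmeet, _⟩ ↦ hcr j hj ▸ hmeet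
  rw [hcr j hj] at hmeet hout
  linarith [lt_two_mul_radius_of_inter_nonempty_of_not_subset hmeet hout]

theorem isNullFamily (hdisc : ∀ j, IsRoundDisc (Δ j))
    (hdisj : Pairwise (Function.onFun Disjoint Δ)) : IsNullFamily Δ := by
  intro y W hW
  have hinfty : {j | ∞ ∈ Δ j}.Finite :=
    Subsingleton.finite fun i hi j hj ↦ hdisj.eq (not_disjoint_iff.mpr ⟨∞, hi, hj⟩)
  suffices ∃ V ∈ 𝓝 y, {j | ∞ ∉ Δ j ∧ (Δ j ∩ V).Nonempty ∧ ¬Δ j ⊆ W}.Finite by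
    obtain ⟨V, hV, hfin⟩ := this
    refine ⟨V, hV, (hinfty.union hfin).subset fun j hj ↦ ?_⟩
    by_cases hjinfty : ∞ ∈ Δ j
    exacts [Or.inl hjinfty, Or.inr ⟨hjinfty, hj⟩]
  induction y using OnePoint.rec with
  | coe x =>
    obtain ⟨ε, hε, hεW⟩ := Metric.mem_nhds_iff.mp
      (OnePoint.continuous_coe.continuousAt.preimage_mem_nhds hW)
    have hδ : 0 < ε / 3 := by positivity
    refine ⟨(↑) '' ball x (ε / 3), (OnePoint.isOpenMap_coe _ isOpen_ball).mem_nhds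
      (mem_image_of_mem _ (mem_ball_self hδ)),
      (finite_setOf_preimage_coe_inter_nonempty_not_subset hdisc hdisj hδ x (ε / 3)).subset ?_⟩
    rintro j ⟨hj, ⟨_, hzj, z, hz, rfl⟩, hjW⟩
    refine ⟨hj, ⟨z, hzj, ball_subset_closedBall hz⟩, fun hsub ↦ hjW ?_⟩
    exact OnePoint.subset_of_preimage_coe_subset hj
      (hsub.trans ((closedBall_subset_ball (by linarith)).trans hεW))
  | infty =>
    have hW' : (↑) ⁻¹' W ∈ Bornology.cobounded ℂ := by
      rw [cobounded_eq_cocompact, ← coclosedCompact_eq_cocompact,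
        ← OnePoint.comap_coe_nhds_infty]
      exact preimage_mem_comap hW
    obtain ⟨R, -, hRW⟩ := (hasBasis_cobounded_compl_closedBall (0 : ℂ)).mem_iff.mp hW'
    refine ⟨((↑) '' closedBall (0 : ℂ) (R + 1))ᶜ, (OnePoint.isOpen_compl_image_coe.mpr
      ⟨isClosed_closedBall, isCompact_closedBall _ _⟩).mem_nhds OnePoint.infty_notMem_image_coe,
      (finite_setOf_preimage_coe_inter_nonempty_not_subset hdisc hdisj one_pos 0 R).subset ?_⟩
    rintro j ⟨hj, ⟨w, hwj, hwV⟩, hjW⟩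
    obtain ⟨z, rfl⟩ := OnePoint.ne_infty_iff_exists.mp (ne_of_mem_of_not_mem hwj hj)
    refine ⟨hj, not_disjoint_iff_nonempty_inter.mp fun hdisj ↦ hjW ?_,
      fun hsub ↦ hwV (mem_image_of_mem _ (hsub hwj))⟩
    exact OnePoint.subset_of_preimage_coe_subset hj
      ((subset_compl_iff_disjoint_right.mpr hdisj).trans hRW)

end IsRoundDisc

theorem union_of_discs_meeting_compact_is_closed_general
    (Ω : Set (OnePoint ℂ)) (hopen : IsOpen Ω)
    (Δ : ℕ → Set (OnePoint ℂ)) (hdisc : ∀ j, IsRoundDisc (Δ j))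
    (hdisj : Pairwise (Function.onFun Disjoint Δ)) (hcompl : (⋃ j, Δ j) = Ωᶜ)
    (C : Set (OnePoint ℂ)) (hC : IsCompact C) :
    IsClosed (⋃ j ∈ {j : ℕ | (Δ j ∩ C).Nonempty}, Δ j) ∧
    ∀ x ∈ ⋃ j ∈ {j : ℕ | (Δ j ∩ C).Nonempty}, Δ j,
      connectedComponentIn Ωᶜ x ⊆ ⋃ j ∈ {j : ℕ | (Δ j ∩ C).Nonempty}, Δ j := by
  have hcl : ∀ j, IsClosed (Δ j) := fun j ↦ (hdisc j).isClosed
  refine ⟨(IsRoundDisc.isNullFamily hdisc hdisj).isClosed_biUnion_inter_nonempty hcl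
    (hcompl ▸ hopen.isClosed_compl) hC, fun x hx y hy ↦ ?_⟩
  obtain ⟨j, hj, hxj⟩ := mem_iUnion₂.mp hx
  have hsub : connectedComponentIn Ωᶜ x ⊆ ⋃ i, Δ i :=
    hcompl ▸ connectedComponentIn_subset _ _
  have hxΩ : x ∈ Ωᶜ := hcompl ▸ mem_iUnion_of_mem j hxj
  obtain ⟨i, hyi⟩ := mem_iUnion.mp (hsub hy)
  have hij : i = j := IsPreconnected.subsingleton_setOf_inter_nonempty hcl hdisj
    (hopen.isClosed_compl.isCompact.connectedComponentIn x) isPreconnected_connectedComponentIn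
    hsub ⟨y, hy, hyi⟩ ⟨x, mem_connectedComponentIn hxΩ, hxj⟩
  exact mem_biUnion hj (hij ▸ hyi)

/-- **Remark/Lemma.** Let `Ω ⊆ ℙ¹` be a circled domain with complementary closed round
discs `Δ j` (`j ∈ ℕ`), and let `C ⊆ ℙ¹` be a compact set. Then the union of all the
discs `Δ j` meeting `C` is a closed set, and it is a union of connected components of
`ℙ¹ \ Ω`. -/
theorem union_of_discs_meeting_compact_is_closed
    (Ω : Set (OnePoint ℂ)) (hopen : IsOpen Ω) (hconn : IsConnected Ω)
    (Δ : ℕ → Set (OnePoint ℂ)) (hdisc : ∀ j, IsRoundDisc (Δ j))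
    (hdisj : Pairwise (Function.onFun Disjoint Δ)) (hcompl : (⋃ j, Δ j) = Ωᶜ)
    (C : Set (OnePoint ℂ)) (hC : IsCompact C) :
    IsClosed (⋃ j ∈ {j : ℕ | (Δ j ∩ C).Nonempty}, Δ j) ∧
    ∀ x ∈ ⋃ j ∈ {j : ℕ | (Δ j ∩ C).Nonempty}, Δ j,
      connectedComponentIn Ωᶜ x ⊆ ⋃ j ∈ {j : ℕ | (Δ j ∩ C).Nonempty}, Δ j :=
  union_of_discs_meeting_compact_is_closed_general Ω hopen Δ hdisc hdisj hcompl C hC
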